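/- Fix an integer r ≥ 1. In the polynomial ring ℚ[x] define, for each integer j ≥ 0, ν_j := (1/j!)·Σ_{σ ∈ S_j} det(I_j + x·P_σ)^r, with ν_0 = 1. Then for every n ≥ 1: ν_n = (1/n)·Σ_{k=1}^{n} (1 − (−x)^k)^r · ν_{n−k}. -/

import Mathlib

open Polynomial

/-- The `j × j` permutation matrix of `σ`, with `(i,l)` entry `1` if `σ l = i`, else `0`. -/
noncomputable def permMatrix (F : Type*) [Zero F] [One F] {j : ℕ} (σ : Equiv.Perm (Fin j)) :
    Matrix (Fin j) (Fin j) F :=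
  Matrix.of fun i l => if σ l = i then 1 else 0

/-- `ν_j = (1/j!) Σ_{σ ∈ S_j} det(I + x P_σ)^r ∈ ℚ[x]` (so `ν_0 = 1`). -/
noncomputable def nuChar (r : ℕ) (j : ℕ) : ℚ[X] :=
  ((j.factorial : ℚ)⁻¹) •
    ∑ σ : Equiv.Perm (Fin j),
      (Matrix.det (1 + (Polynomial.X : ℚ[X]) • permMatrix ℚ[X] σ)) ^ r

/-!
The weight `det(1 + x P_σ)` is multiplicative over the cycles of `σ`, and a `k`-cycle contributes
`1 - (-x)^k`: in the Leibniz expansion of `det(1 + x P_c)` for a full cycle `c`, only the terms of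
`1` and `c` survive. Now count pairs (point `a`, permutation `σ`) by the length `k` of the cycle
of `σ` through `a`. Listing that cycle as an embedding `Fin k ↪ α`, the permutations containing a
given listed cycle correspond to the permutations of the other `n - k` points, so
`n · Σ_σ det(1 + x P_σ)^r = Σ_k n!/(n-k)! · (1 - (-x)^k)^r · Σ_τ det(1 + x P_τ)^r`,
and dividing by `n · n!` gives the recursion.
-/

open Equiv Finset Function Matrix

namespace Equiv.Perm

section Determinant

variable {α β : Type*} [DecidableEq α] [DecidableEq β]

theorem eq_one_or_eq_of_forall_apply_eq_or [Fintype α] {σ τ : Perm α} (hσ : σ.IsCycle)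
    (hsupp : σ.support = univ) (h : ∀ x, τ x = x ∨ τ x = σ x) : τ = 1 ∨ τ = σ := by
  refine or_iff_not_imp_left.mpr fun hτ => ?_
  have hfix : ∀ x, σ x ≠ x := fun x => mem_support.mp (hsupp ▸ mem_univ x)
  obtain ⟨x₀, hx₀⟩ : ∃ x, τ x ≠ x := by
    contrapose! hτ
    exact Equiv.ext hτ
  -- once `τ` moves one point of the cycle like `σ`, it cannot stop doing so
  have hpow : ∀ n : ℕ, τ ((σ ^ n) x₀) = σ ((σ ^ n) x₀) := by
    intro n
    induction n with
    | zero => exact (h x₀).resolve_left hx₀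
    | succ n ih =>
      rw [pow_succ', mul_apply]
      refine (h _).resolve_left fun hstay => hfix ((σ ^ n) x₀) (τ.injective ?_)
      rw [hstay, ih]
  ext x
  obtain ⟨n, -, rfl⟩ := (hσ.sameCycle (hfix x₀) (hfix x)).exists_pow_eq'
  exact hpow n

variable {R : Type*} [CommRing R]

theorem det_one_add_smul_permMatrix_of_isCycle [Fintype α] {σ : Perm α} (hσ : σ.IsCycle)
    (hsupp : σ.support = univ) (c : R) :
    (1 + c • σ.permMatrix R).det = 1 - (-c) ^ Fintype.card α := by
  have hfix : ∀ x, σ x ≠ x := fun x => mem_support.mp (hsupp ▸ mem_univ x)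
  have hsupp' : σ⁻¹.support = univ := by rw [support_inv, hsupp]
  have entry : ∀ (τ : Perm α) i, (1 + c • σ.permMatrix R) (τ i) i =
      (if τ i = i then 1 else 0) + c * (if σ (τ i) = i then 1 else 0) := by
    intro τ i
    simp [Matrix.one_apply, PEquiv.toMatrix_apply, toPEquiv_apply]
  rw [det_apply', Fintype.sum_eq_add 1 σ⁻¹ hσ.inv.ne_one.symm]
  · have h1 : ∏ i, (1 + c • σ.permMatrix R) ((1 : Perm α) i) i = 1 :=
      prod_eq_one fun i _ => by simp [hfix i]
    have h2 : ∏ i, (1 + c • σ.permMatrix R) (σ⁻¹ i) i = c ^ Fintype.card α := by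
      have hmoved : ∀ x, x ≠ σ x := fun x => (hfix x).symm
      simp [entry, symm_apply_eq, hmoved]
    rw [h1, h2, sign_one, sign_inv, hσ.sign, hsupp, card_univ, neg_pow]
    push_cast
    ring
  · rintro τ ⟨h1, h2⟩
    obtain ⟨i, hi⟩ : ∃ i, τ i ≠ i ∧ σ (τ i) ≠ i := by
      by_contra! hall
      rcases eq_one_or_eq_of_forall_apply_eq_or hσ.inv hsupp'
        (fun i => (em _).imp_right fun hi => eq_inv_iff_eq.mpr (hall i hi)) with h | h
      exacts [h1 h, h2 h]
    rw [prod_eq_zero (mem_univ i) (by simp [entry, hi.1, hi.2]), mul_zero]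

theorem det_one_add_smul_permMatrix_finRotate (k : ℕ) (c : R) :
    (1 + c • (finRotate (k + 1)).permMatrix R).det = 1 - (-c) ^ (k + 1) := by
  cases k with
  | zero => simp [finRotate_one]
  | succ k =>
    rw [det_one_add_smul_permMatrix_of_isCycle isCycle_finRotate support_finRotate,
      Fintype.card_fin]

theorem permMatrix_permCongr (e : α ≃ β) (σ : Perm α) :
    (e.permCongr σ).permMatrix R = (σ.permMatrix R).submatrix e.symm e.symm := by
  ext i j
  simp [PEquiv.toMatrix_apply, toPEquiv_apply, permCongr_apply, eq_symm_apply]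

theorem det_one_add_smul_permMatrix_permCongr [Fintype α] [Fintype β] (e : α ≃ β) (σ : Perm α)
    (c : R) :
    (1 + c • (e.permCongr σ).permMatrix R).det = (1 + c • σ.permMatrix R).det := by
  rw [permMatrix_permCongr, ← det_submatrix_equiv_self e.symm]
  congr 1
  ext i j
  simp [Matrix.one_apply]

theorem permMatrix_sumCongr (σ : Perm α) (τ : Perm β) :
    (σ.sumCongr τ).permMatrix R = fromBlocks (σ.permMatrix R) 0 0 (τ.permMatrix R) := by
  ext (i | i) (j | j) <;> simp [PEquiv.toMatrix_apply, toPEquiv_apply]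

theorem det_one_add_smul_permMatrix_sumCongr [Fintype α] [Fintype β] (σ : Perm α) (τ : Perm β)
    (c : R) :
    (1 + c • (σ.sumCongr τ).permMatrix R).det =
      (1 + c • σ.permMatrix R).det * (1 + c • τ.permMatrix R).det := by
  rw [permMatrix_sumCongr, ← fromBlocks_one, fromBlocks_smul, fromBlocks_add,
    smul_zero, add_zero, det_fromBlocks_zero₁₂]

theorem det_one_add_smul_permMatrix_subtypeCongr [Fintype α] {p : α → Prop} [DecidablePred p]
    [Fintype (Subtype p)] [Fintype {x // ¬ p x}] (σ : Perm (Subtype p)) (τ : Perm {x // ¬ p x})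
    (c : R) :
    (1 + c • (σ.subtypeCongr τ).permMatrix R).det =
      (1 + c • σ.permMatrix R).det * (1 + c • τ.permMatrix R).det := by
  rw [subtypeCongr, det_one_add_smul_permMatrix_permCongr,
    det_one_add_smul_permMatrix_sumCongr]

end Determinant

section Orbit

variable {α : Type*} [Fintype α] [DecidableEq α]

theorem sum_filter_forall_apply_eq {M : Type*} [AddCommMonoid M] {p : α → Prop}
    [DecidablePred p] (c : Perm (Subtype p))
    [DecidablePred fun σ : Perm α => ∀ x : Subtype p, σ x = ↑(c x)] (f : Perm α → M) :
    ∑ σ with ∀ x : Subtype p, σ x = ↑(c x), f σ =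
      ∑ τ : Perm {x // ¬ p x}, f (c.subtypeCongr τ) := by
  symm
  refine sum_bij (fun τ _ => c.subtypeCongr τ) (fun τ _ => ?_) (fun τ₁ _ τ₂ _ h => ?_)
    (fun σ hσ => ?_) (fun _ _ => rfl)
  · simpa using fun x hx => subtypeCongr.left_apply c τ hx
  · ext x
    simpa [subtypeCongr.right_apply_subtype] using congr($h x)
  · rw [mem_filter] at hσ
    -- `σ` agrees with the bijection `c` on `p`, so nothing outside `p` is mapped into `p`
    have hp : ∀ x, p (σ x) ↔ p x := fun x => by
      refine ⟨fun hσx => ?_, fun hx => hσ.2 ⟨x, hx⟩ ▸ (c _).2⟩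
      obtain ⟨y, hy⟩ := c.surjective ⟨σ x, hσx⟩
      have : σ y = σ x := (hσ.2 y).trans congr($hy.1)
      exact σ.injective this ▸ y.2
    refine ⟨σ.subtypePerm fun x => not_congr (hp x), mem_univ _, ?_⟩
    ext x
    by_cases hx : p x
    · simp [subtypeCongr.left_apply _ _ hx, ← hσ.2 ⟨x, hx⟩]
    · simp [subtypeCongr.right_apply _ _ hx]

omit [Fintype α] [DecidableEq α] in
theorem iterate_apply_zero_of_forall_apply_eq {k : ℕ} {σ : Perm α} {g : Fin (k + 1) → α}
    (hg : ∀ i, σ (g i) = g (finRotate _ i)) (i : Fin (k + 1)) :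
    g i = σ^[i] (g 0) := by
  induction i using Fin.induction with
  | zero => rfl
  | succ i ih =>
    rw [Fin.val_succ, iterate_succ_apply', ← Fin.val_castSucc, ← ih, hg, finRotate_apply,
      Fin.coeSucc_eq_succ]

omit [Fintype α] [DecidableEq α] in
theorem minimalPeriod_eq_of_forall_apply_eq {k : ℕ} {σ : Perm α} {g : Fin (k + 1) ↪ α}
    (hg : ∀ i, σ (g i) = g (finRotate _ i)) : minimalPeriod σ (g 0) = k + 1 := by
  have hper : IsPeriodicPt σ (k + 1) (g 0) := by
    have hlast := iterate_apply_zero_of_forall_apply_eq hg (Fin.last k)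
    rw [Fin.val_last] at hlast
    rw [IsPeriodicPt, IsFixedPt, iterate_succ_apply', ← hlast, hg, finRotate_last]
  have hpos := hper.minimalPeriod_pos k.succ_pos
  refine (hper.minimalPeriod_le k.succ_pos).antisymm (not_lt.mp fun hlt => hpos.ne' ?_)
  have hiter := iterate_minimalPeriod (f := σ) (x := g 0)
  rw [← Fin.val_mk hlt, ← iterate_apply_zero_of_forall_apply_eq hg] at hiter
  exact congr_arg Fin.val (g.injective hiter)

def orbitEmbeddingEquiv (σ : Perm α) (k : ℕ) :
    {a // minimalPeriod σ a = k + 1} ≃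
      {g : Fin (k + 1) ↪ α // ∀ i, σ (g i) = g (finRotate _ i)} where
  toFun a := ⟨⟨fun i => σ^[i] a, fun i j hij => Fin.ext <|
      iterate_injOn_Iio_minimalPeriod (by simp [a.2, i.2]) (by simp [a.2, j.2]) hij⟩, fun i => by
    rcases Fin.eq_castSucc_or_eq_last i with ⟨i, rfl⟩ | rfl
    · rw [finRotate_apply, Fin.coeSucc_eq_succ]
      show σ (σ^[i] a) = σ^[i + 1] a
      rw [iterate_succ_apply']
    · rw [finRotate_last]
      show σ (σ^[k] a) = a
      have hper := iterate_minimalPeriod (f := σ) (x := a)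
      rwa [a.2, iterate_succ_apply'] at hper⟩
  invFun g := ⟨g.1 0, minimalPeriod_eq_of_forall_apply_eq g.2⟩
  left_inv a := rfl
  right_inv g := Subtype.ext <| Embedding.ext fun i =>
    (iterate_apply_zero_of_forall_apply_eq g.2 i).symm

theorem card_eq_sum_card_filter_forall_apply_eq_finRotate (σ : Perm α) :
    Fintype.card α = ∑ k ∈ Icc 1 (Fintype.card α),
      #{g : Fin k ↪ α | ∀ i, σ (g i) = g (finRotate k i)} := by
  have hmem : ∀ a ∈ univ, minimalPeriod σ a ∈ Icc 1 (Fintype.card α) := fun a _ =>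
    mem_Icc.mpr ⟨minimalPeriod_pos_of_mem_periodicPts (σ.injective.mem_periodicPts a),
      minimalPeriod_le_card⟩
  refine (card_eq_sum_card_fiberwise hmem).trans (sum_congr rfl fun k hk => ?_)
  obtain ⟨j, rfl⟩ := Nat.exists_eq_add_of_le' (mem_Icc.mp hk).1
  rw [← Fintype.card_subtype, ← Fintype.card_subtype]
  exact Fintype.card_congr (orbitEmbeddingEquiv σ j)

end Orbit

end Equiv.Perm

section DetPowSum

variable {R : Type*} [CommRing R] (c : R) (r : ℕ)

def detPowSum (β : Type*) [Fintype β] [DecidableEq β] : R :=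
  ∑ σ : Perm β, (1 + c • σ.permMatrix R).det ^ r

variable {α β : Type*} [Fintype α] [DecidableEq α] [Fintype β] [DecidableEq β]

theorem detPowSum_congr (e : α ≃ β) : detPowSum c r α = detPowSum c r β :=
  Fintype.sum_equiv e.permCongr _ _ fun σ => by
    rw [Perm.det_one_add_smul_permMatrix_permCongr]

theorem sum_filter_forall_apply_eq_finRotate {k : ℕ} (g : Fin (k + 1) ↪ α) :
    ∑ σ : Perm α with ∀ i, σ (g i) = g (finRotate _ i), (1 + c • σ.permMatrix R).det ^ r =
      (1 - (-c) ^ (k + 1)) ^ r * detPowSum c r (Fin (Fintype.card α - (k + 1))) := by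
  let e : Fin (k + 1) ≃ {x // x ∈ Set.range g} := Equiv.ofInjective g g.injective
  have hext : ∀ σ : Perm α, (∀ i, σ (g i) = g (finRotate _ i)) ↔
      ∀ x : {x // x ∈ Set.range g}, σ x = ↑(e.permCongr (finRotate _) x) := fun σ =>
    e.forall_congr (by simp [e, permCongr_apply])
  have hcompl : Fintype.card {x // x ∉ Set.range g} = Fintype.card α - (k + 1) := by
    rw [Fintype.card_subtype_compl, Set.card_range_of_injective g.injective, Fintype.card_fin]
  rw [filter_congr fun σ _ => hext σ, Perm.sum_filter_forall_apply_eq, detPowSum_congr c r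
    (Fintype.equivFinOfCardEq hcompl).symm, detPowSum, mul_sum]
  refine sum_congr rfl fun τ _ => ?_
  rw [Perm.det_one_add_smul_permMatrix_subtypeCongr, Perm.det_one_add_smul_permMatrix_permCongr,
    Perm.det_one_add_smul_permMatrix_finRotate, mul_pow]

theorem card_mul_detPowSum :
    (Fintype.card α : R) * detPowSum c r α = ∑ k ∈ Icc 1 (Fintype.card α),
      ((Fintype.card α).descFactorial k : R) * (1 - (-c) ^ k) ^ r *
        detPowSum c r (Fin (Fintype.card α - k)) := by
  calc (Fintype.card α : R) * detPowSum c r α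
      = ∑ σ : Perm α, ∑ k ∈ Icc 1 (Fintype.card α), ∑ g : Fin k ↪ α,
          if ∀ i, σ (g i) = g (finRotate k i) then (1 + c • σ.permMatrix R).det ^ r else 0 := by
        rw [detPowSum, mul_sum]
        refine sum_congr rfl fun σ _ => ?_
        conv_lhs => rw [σ.card_eq_sum_card_filter_forall_apply_eq_finRotate]
        simp only [card_filter, Nat.cast_sum, Nat.cast_ite, Nat.cast_one, Nat.cast_zero, sum_mul,
          ite_mul, one_mul, zero_mul]
    _ = ∑ k ∈ Icc 1 (Fintype.card α), ∑ g : Fin k ↪ α,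
          ∑ σ : Perm α with ∀ i, σ (g i) = g (finRotate k i), (1 + c • σ.permMatrix R).det ^ r := by
        rw [sum_comm]
        simp_rw [sum_filter]
        exact sum_congr rfl fun k _ => sum_comm
    _ = _ := by
        refine sum_congr rfl fun k hk => ?_
        obtain ⟨j, rfl⟩ := Nat.exists_eq_add_of_le' (mem_Icc.mp hk).1
        simp_rw [sum_filter_forall_apply_eq_finRotate, sum_const, card_univ,
          Fintype.card_embedding_eq, Fintype.card_fin, nsmul_eq_mul, mul_assoc]

end DetPowSum

theorem permMatrix_eq_transpose (F : Type*) [Zero F] [One F] {j : ℕ} (σ : Perm (Fin j)) :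
    permMatrix F σ = (σ.permMatrix F)ᵀ := by
  ext i l
  simp [permMatrix, PEquiv.toMatrix_apply, toPEquiv_apply]

theorem nuChar_eq_inv_factorial_smul_detPowSum (r j : ℕ) :
    nuChar r j = (j.factorial : ℚ)⁻¹ • detPowSum (X : ℚ[X]) r (Fin j) := by
  rw [nuChar, detPowSum]
  refine congrArg (_ • ·) (sum_congr rfl fun σ _ => ?_)
  rw [permMatrix_eq_transpose, ← det_transpose]
  simp

theorem inv_factorial_mul_descFactorial {K : Type*} [Field K] [CharZero K] {n k : ℕ}
    (hk : k ≤ n) : (n.factorial : K)⁻¹ * n.descFactorial k = ((n - k).factorial : K)⁻¹ := by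
  have hd : (n.descFactorial k : K) ≠ 0 :=
    Nat.cast_ne_zero.mpr (mt Nat.descFactorial_eq_zero_iff_lt.mp (not_lt.mpr hk))
  rw [← Nat.factorial_mul_descFactorial hk, Nat.cast_mul, mul_inv, mul_assoc,
    inv_mul_cancel₀ hd, mul_one]

theorem nuChar_recursion_general (r : ℕ) (n : ℕ) (hn : 1 ≤ n) :
    nuChar r n = ((n : ℚ)⁻¹) • ∑ k ∈ Finset.Icc 1 n,
      (1 - (-(Polynomial.X : ℚ[X])) ^ k) ^ r * nuChar r (n - k) := by
  have hrec := card_mul_detPowSum (X : ℚ[X]) r (α := Fin n)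
  rw [Fintype.card_fin, ← nsmul_eq_mul, ← Nat.cast_smul_eq_nsmul ℚ] at hrec
  have hn0 : (n : ℚ) ≠ 0 := Nat.cast_ne_zero.mpr (Nat.one_le_iff_ne_zero.mp hn)
  calc nuChar r n
      = (n : ℚ)⁻¹ • (n.factorial : ℚ)⁻¹ • ((n : ℚ) • detPowSum (X : ℚ[X]) r (Fin n)) := by
        rw [nuChar_eq_inv_factorial_smul_detPowSum, smul_comm, inv_smul_smul₀ hn0]
    _ = _ := by
        rw [hrec, smul_sum]
        congr 1
        refine sum_congr rfl fun k hk => ?_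
        rw [nuChar_eq_inv_factorial_smul_detPowSum, ← inv_factorial_mul_descFactorial
          (mem_Icc.mp hk).2]
        simp only [smul_eq_C_mul, map_mul, map_natCast]
        ring

/-- For `r ≥ 1` and every `n ≥ 1`:
`ν_n = (1/n) Σ_{k=1}^n (1 − (−x)^k)^r ν_{n−k}`. -/
theorem nuChar_recursion (r : ℕ) (hr : 1 ≤ r) (n : ℕ) (hn : 1 ≤ n) :
    nuChar r n = ((n : ℚ)⁻¹) • ∑ k ∈ Finset.Icc 1 n,
      (1 - (-(Polynomial.X : ℚ[X])) ^ k) ^ r * nuChar r (n - k) :=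
  nuChar_recursion_general r n hn
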